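/- Let C be a locally finitely presented Grothendieck category and let S be a class of compact objects of C that generates C. Then an object X of C is compact if and only if there exists an exact sequence ⊕_{i=0}^n S_i → ⊕_{j=0}^m S'_j → X → 0 with all S_i, S'_j belonging to S (i.e. X is the cokernel of a morphism between finite direct sums of objects of S). -/

import Mathlib

open CategoryTheory Limits Opposite

universe u

namespace Env

section Basics

variable {C : Type*} [Category C]

/-- `g` is a weak kernel of `f`. -/
def IsWeakKernel [Limits.HasZeroMorphisms C] {A B K : C} (f : B ⟶ A) (g : K ⟶ B) : Prop :=
  g ≫ f = 0 ∧ ∀ ⦃K' : C⦄ (g' : K' ⟶ B), g' ≫ f = 0 → ∃ t : K' ⟶ K, t ≫ g = g'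

/-- `h` is a weak cokernel of `f`. -/
def IsWeakCokernel [Limits.HasZeroMorphisms C] {A B Q : C} (f : A ⟶ B) (h : B ⟶ Q) : Prop :=
  f ≫ h = 0 ∧ ∀ ⦃Q' : C⦄ (h' : B ⟶ Q'), f ≫ h' = 0 → ∃ t : Q ⟶ Q', h ≫ t = h'

/-- A kernel–cokernel pair: `f ≫ g = 0`, `f` is a kernel of `g` and `g` is a cokernel of `f`. -/
structure IsKernelCokernelPair [Limits.HasZeroMorphisms C] {A B X : C}
    (f : A ⟶ B) (g : B ⟶ X) : Prop where
  zero : f ≫ g = 0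
  isKernel : Nonempty (IsLimit (KernelFork.ofι f zero))
  isCokernel : Nonempty (IsColimit (CokernelCofork.ofπ g zero))

end Basics

lemma map_comp_zero {C : Type*} [Category C] [Preadditive C]
    {D : Type*} [Category D] [Preadditive D]
    (F : C ⥤ D) (hF : F.Additive) {X Y Z : C} {f : X ⟶ Y} {g : Y ⟶ Z}
    (wzero : f ≫ g = 0) : F.map f ≫ F.map g = 0 := by
  haveI := hF
  rw [← F.map_comp, wzero, Functor.map_zero]

/-- A Quillen exact structure on an additive category: a distinguished class of conflations
(kernel–cokernel pairs) satisfying Quillen's axioms. -/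
structure ExactStructure (E : Type*) [Category E] [Preadditive E] where
  /-- `conf f g` means that `(f, g)` is a conflation. -/
  conf : ∀ ⦃A B C : E⦄, (A ⟶ B) → (B ⟶ C) → Prop
  conf_pair : ∀ ⦃A B C : E⦄ (f : A ⟶ B) (g : B ⟶ C), conf f g → IsKernelCokernelPair f g
  defl_id : ∀ X : E, ∃ (A : E) (f : A ⟶ X), conf f (𝟙 X)
  defl_comp : ∀ ⦃A B C : E⦄ (g : A ⟶ B) (g' : B ⟶ C),
    (∃ (K : E) (f : K ⟶ A), conf f g) → (∃ (K : E) (f : K ⟶ B), conf f g') →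
    ∃ (K : E) (f : K ⟶ A), conf f (g ≫ g')
  defl_pullback : ∀ ⦃B C C' : E⦄ (g : B ⟶ C) (h : C' ⟶ C),
    (∃ (K : E) (f : K ⟶ B), conf f g) →
    ∃ (B' : E) (p : B' ⟶ B) (q : B' ⟶ C') (w : p ≫ g = q ≫ h),
      (∃ (K : E) (f : K ⟶ B'), conf f q) ∧ Nonempty (IsLimit (PullbackCone.mk p q w))
  infl_pushout : ∀ ⦃A B A' : E⦄ (f : A ⟶ B) (h : A ⟶ A'),
    (∃ (C : E) (g : B ⟶ C), conf f g) →
    ∃ (B' : E) (p : B ⟶ B') (q : A' ⟶ B') (w : f ≫ p = h ≫ q),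
      (∃ (C : E) (g : B' ⟶ C), conf q g) ∧ Nonempty (IsColimit (PushoutCocone.mk p q w))

section Exact

variable {E : Type*} [Category E] [Preadditive E]

/-- `g` is a deflation for the exact structure `S`. -/
def ExactStructure.IsDeflation (S : ExactStructure E) {B C : E} (g : B ⟶ C) : Prop :=
  ∃ (K : E) (f : K ⟶ B), S.conf f g

/-- `f` is an inflation for the exact structure `S`. -/
def ExactStructure.IsInflation (S : ExactStructure E) {A B : E} (f : A ⟶ B) : Prop :=
  ∃ (C : E) (g : B ⟶ C), S.conf f g

/-- A functor from an exact category to an additive category is right exact if it is additive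
and for every conflation `(f, g)`, `F g` is a cokernel of `F f`. -/
structure IsRightExact (S : ExactStructure E) {B : Type*} [Category B] [Preadditive B]
    (F : E ⥤ B) : Prop where
  additive : F.Additive
  preserves : ∀ ⦃A X C : E⦄ (f : A ⟶ X) (g : X ⟶ C) (h : S.conf f g),
    Nonempty (IsColimit (CokernelCofork.ofπ (F.map g)
      (map_comp_zero F additive (S.conf_pair f g h).zero)))

/-- A functor from an exact category to an additive category is left exact if it is additive
and for every conflation `(f, g)`, `F f` is a kernel of `F g`. -/
structure IsLeftExact (S : ExactStructure E) {B : Type*} [Category B] [Preadditive B]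
    (F : E ⥤ B) : Prop where
  additive : F.Additive
  preserves : ∀ ⦃A X C : E⦄ (f : A ⟶ X) (g : X ⟶ C) (h : S.conf f g),
    Nonempty (IsLimit (KernelFork.ofι (F.map f)
      (map_comp_zero F additive (S.conf_pair f g h).zero)))

/-- `g : C ⟶ B` is an Ext-kernel of `f : B ⟶ A` (w.r.t. the exact structure `S`):
`g ≫ f = 0` and for every `g' : C' ⟶ B` with `g' ≫ f = 0` there is a deflation
`d : D ⟶ C'` such that `d ≫ g'` factors through `g`. -/
def IsExtKernel (S : ExactStructure E) {A B C : E} (f : B ⟶ A) (g : C ⟶ B) : Prop :=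
  g ≫ f = 0 ∧ ∀ ⦃C' : E⦄ (g' : C' ⟶ B), g' ≫ f = 0 →
    ∃ (D : E) (d : D ⟶ C'), S.IsDeflation d ∧ ∃ t : D ⟶ C, t ≫ g = d ≫ g'

/-- An exact category is left Ext-coherent if every morphism admits an Ext-kernel. -/
def LeftExtCoherent (S : ExactStructure E) : Prop :=
  ∀ ⦃B A : E⦄ (f : B ⟶ A), ∃ (C : E) (g : C ⟶ B), IsExtKernel S f g

end Exact

/-- An additive category is left coherent if every morphism admits a weak kernel. -/
def LeftCoherent (E : Type*) [Category E] [Preadditive E] : Prop :=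
  ∀ ⦃B A : E⦄ (f : B ⟶ A), ∃ (K : E) (g : K ⟶ B), IsWeakKernel f g

section MoreDefs

variable (C : Type*) [Category C] [Preadditive C]

/-- An additive functor between additive categories preserving cokernels: every morphism
which is a cokernel (of some morphism) is sent to a cokernel of its image. -/
structure PreservesCokernelsP {C : Type*} [Category C] [Preadditive C]
    {D : Type*} [Category D] [Preadditive D] (F : C ⥤ D) : Prop where
  additive : F.Additive
  preserves : ∀ ⦃X Y Z : C⦄ (f : X ⟶ Y) (c : Y ⟶ Z) (w : f ≫ c = 0),
    Nonempty (IsColimit (CokernelCofork.ofπ c w)) →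
    Nonempty (IsColimit (CokernelCofork.ofπ (F.map c) (map_comp_zero F additive w)))

/-- An additive category is left abelian if it has cokernels and for every morphism
`f : A ⟶ B` with cokernel `c : B ⟶ X` and every `g : D ⟶ B` with `g ≫ c = 0` there is
a morphism `d : E ⟶ D` which is a cokernel (of some morphism), such that `d ≫ g` factors
through `f`. -/
structure IsLeftAbelian : Prop where
  hasCokernels : HasCokernels C
  factor : ∀ ⦃A B X : C⦄ (f : A ⟶ B) (c : B ⟶ X) (w : f ≫ c = 0),
    Nonempty (IsColimit (CokernelCofork.ofπ c w)) →
    ∀ ⦃D : C⦄ (g : D ⟶ B), g ≫ c = 0 →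
      ∃ (W E : C) (u : W ⟶ E) (d : E ⟶ D) (w' : u ≫ d = 0),
        Nonempty (IsColimit (CokernelCofork.ofπ d w')) ∧ ∃ t : E ⟶ A, t ≫ f = d ≫ g

/-- A preadditive category (with its given preadditive structure) is abelian:
it has finite biproducts, kernels and cokernels, and every monomorphism and every
epimorphism is normal. -/
def IsAbelianP : Prop :=
  HasFiniteBiproducts C ∧ HasKernels C ∧ HasCokernels C ∧
    (∀ ⦃X Y : C⦄ (f : X ⟶ Y), Mono f → Nonempty (NormalMono f)) ∧
    (∀ ⦃X Y : C⦄ (f : X ⟶ Y), Epi f → Nonempty (NormalEpi f))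

end MoreDefs

/-- An object `X` is compact (finitely presented) if `Hom(X, -)` preserves filtered colimits
(indexed by small filtered categories in `Type u`). -/
def IsCompact {C : Type*} [Category C] (X : C) : Prop :=
  ∀ (J : Type u) (_ : SmallCategory J), IsFiltered J →
    Nonempty (PreservesColimitsOfShape J (coyoneda.obj (op X)))

section RexAbelian

variable {A : Type*} [Category A] [Abelian A] {B : Type*} [Category B] [Preadditive B]

/-- A functor from an abelian category (whose conflations are all kernel–cokernel pairs,
i.e. all short exact sequences) is right exact if it is additive and sends every short exact
sequence `(f, g)` to a diagram where `F g` is a cokernel of `F f`. -/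
structure IsRightExactAb (F : A ⥤ B) : Prop where
  additive : F.Additive
  preserves : ∀ ⦃X Y Z : A⦄ (f : X ⟶ Y) (g : Y ⟶ Z) (h : IsKernelCokernelPair f g),
    Nonempty (IsColimit (CokernelCofork.ofπ (F.map g) (map_comp_zero F additive h.zero)))

/-- A functor from an abelian category (whose conflations are all kernel–cokernel pairs,
i.e. all short exact sequences) is left exact if it is additive and sends every short exact
sequence `(f, g)` to a diagram where `F f` is a kernel of `F g`. -/
structure IsLeftExactAb (F : A ⥤ B) : Prop where
  additive : F.Additive
  preserves : ∀ ⦃X Y Z : A⦄ (f : X ⟶ Y) (g : Y ⟶ Z) (h : IsKernelCokernelPair f g),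
    Nonempty (IsLimit (KernelFork.ofι (F.map f) (map_comp_zero F additive h.zero)))

end RexAbelian

section Envelope

/-- `(A, i)` is a right abelian envelope of the exact category `(E, S)`: `i` is right exact
and for every abelian category `B`, precomposition with `i` induces an equivalence from the
category of right exact functors `A ⥤ B` to the category of right exact functors `E ⥤ B`.

The equivalence given by precomposition is expressed by: precomposition with `i` sends right
exact functors to right exact functors, it is fully faithful (whiskering is a bijection on
natural transformations) and essentially surjective (every right exact `E ⥤ B` is isomorphic
to some `i ⋙ G` with `G` right exact). -/
structure IsRightAbelianEnvelope.{u₀, w₀, v₁, w₁, v₂, w₂} {E : Type u₀} [Category.{w₀} E]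
    [Preadditive E] (S : ExactStructure E)
    {A : Type v₁} [Category.{w₁} A] [Abelian A] (i : E ⥤ A) : Prop where
  rightExact : IsRightExact S i
  comp_rightExact : ∀ (B : Type v₂) [Category.{w₂} B] [Abelian B] (G : A ⥤ B),
    IsRightExactAb G → IsRightExact S (i ⋙ G)
  whisker_bijective : ∀ (B : Type v₂) [Category.{w₂} B] [Abelian B] (G G' : A ⥤ B),
    IsRightExactAb G → IsRightExactAb G' →
      Function.Bijective (fun σ : G ⟶ G' => Functor.whiskerLeft i σ)
  essSurj : ∀ (B : Type v₂) [Category.{w₂} B] [Abelian B] (F : E ⥤ B),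
    IsRightExact S F → ∃ G : A ⥤ B, IsRightExactAb G ∧ Nonempty (i ⋙ G ≅ F)

/-- `(A, i)` is a left abelian envelope of the exact category `(E, S)`: the dual notion of
`IsRightAbelianEnvelope`, with left exact functors in place of right exact ones. -/
structure IsLeftAbelianEnvelope.{u₀, w₀, v₁, w₁, v₂, w₂} {E : Type u₀} [Category.{w₀} E]
    [Preadditive E] (S : ExactStructure E)
    {A : Type v₁} [Category.{w₁} A] [Abelian A] (i : E ⥤ A) : Prop where
  leftExact : IsLeftExact S i
  comp_leftExact : ∀ (B : Type v₂) [Category.{w₂} B] [Abelian B] (G : A ⥤ B),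
    IsLeftExactAb G → IsLeftExact S (i ⋙ G)
  whisker_bijective : ∀ (B : Type v₂) [Category.{w₂} B] [Abelian B] (G G' : A ⥤ B),
    IsLeftExactAb G → IsLeftExactAb G' →
      Function.Bijective (fun σ : G ⟶ G' => Functor.whiskerLeft i σ)
  essSurj : ∀ (B : Type v₂) [Category.{w₂} B] [Abelian B] (F : E ⥤ B),
    IsLeftExact S F → ∃ G : A ⥤ B, IsLeftExactAb G ∧ Nonempty (i ⋙ G ≅ F)

/-- A witness for the existence of a right abelian envelope of `(E, S)`: an abelian
category (with object type in `Type (u + 1)` and hom types in `Type u`) together with a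
right exact functor from `E` satisfying the universal property of the right abelian
envelope (where the test abelian categories are taken of the same size). -/
structure RightAbelianEnvelopeWitness {E : Type u} [SmallCategory E] [Preadditive E]
    (S : ExactStructure E) where
  A : Type (u + 1)
  [cat : Category.{u} A]
  [ab : Abelian A]
  i : E ⥤ A
  env : IsRightAbelianEnvelope.{u, u, u + 1, u, u + 1, u} S i

/-- Existence of a right abelian envelope of `(E, S)`. -/
def HasRightAbelianEnvelope {E : Type u} [SmallCategory E] [Preadditive E]
    (S : ExactStructure E) : Prop :=
  Nonempty (RightAbelianEnvelopeWitness S)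

end Envelope

section Lex

variable {E : Type u} [SmallCategory E] [Preadditive E]

/-- A functor `Eᵒᵖ ⥤ Ab` is left exact w.r.t. the exact structure `S` if it is additive and
sends every conflation `(f : A ⟶ B, g : B ⟶ C)` to an exact sequence
`0 ⟶ F C ⟶ F B ⟶ F A`: `F g.op` is injective and its image is the kernel of `F f.op`. -/
structure IsLexFunctor (S : ExactStructure E) (F : Eᵒᵖ ⥤ AddCommGrpCat.{u}) : Prop where
  additive : F.Additive
  inj : ∀ ⦃A B C : E⦄ (f : A ⟶ B) (g : B ⟶ C), S.conf f g →
    Function.Injective (F.map g.op)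
  ex : ∀ ⦃A B C : E⦄ (f : A ⟶ B) (g : B ⟶ C), S.conf f g →
    ∀ x : F.obj (op B), F.map f.op x = 0 ↔ ∃ y : F.obj (op C), F.map g.op y = x

/-- The category `Lex(E)` of left exact functors `Eᵒᵖ ⥤ Ab`. -/
abbrev LexCat (S : ExactStructure E) := ObjectProperty.FullSubcategory (IsLexFunctor S)

/-- The full subcategory of compact objects of `Lex(E)`. -/
abbrev LexCompact (S : ExactStructure E) :=
  ObjectProperty.FullSubcategory (fun F : LexCat S => IsCompact.{u} F)

lemma yoneda_isLex (S : ExactStructure E) (X : E) :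
    IsLexFunctor S (preadditiveYoneda.obj X) where
  additive := inferInstance
  inj := by
    intro A B C f g hc
    obtain ⟨w, hker, hcoker⟩ := S.conf_pair f g hc
    intro x y hxy
    exact Cofork.IsColimit.hom_ext hcoker.some hxy
  ex := by
    intro A B C f g hc
    obtain ⟨w, hker, hcoker⟩ := S.conf_pair f g hc
    intro x
    constructor
    · intro hx
      obtain ⟨y, hy⟩ := CokernelCofork.IsColimit.desc' hcoker.some x hx
      exact ⟨y, hy⟩
    · rintro ⟨y, rfl⟩
      show f ≫ g ≫ y = 0
      exact (fun z : C ⟶ X => show f ≫ g ≫ z = 0 by rw [← Category.assoc, w, zero_comp]) y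

/-- The Yoneda embedding of `E` into `Lex(E)`, sending `X` to `Hom_E(-, X)`. -/
def yonedaLex (S : ExactStructure E) : E ⥤ LexCat S :=
  ObjectProperty.lift _ preadditiveYoneda (yoneda_isLex S)

/-- The Yoneda embedding of `E` into the subcategory of compact objects of `Lex(E)`, given
a proof that all representable functors are compact. -/
def yonedaLexC (S : ExactStructure E) (hc : ∀ X : E, IsCompact.{u} ((yonedaLex S).obj X)) :
    E ⥤ LexCompact S :=
  ObjectProperty.lift _ (yonedaLex S) hc

end Lex

section LFP

variable {C : Type*} [Category C]

/-- `X` is a filtered colimit of compact objects. -/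
def IsFilteredColimitOfCompacts (X : C) : Prop :=
  ∃ (J : Type u) (_ : SmallCategory J) (_ : IsFiltered J) (F : J ⥤ C)
    (_ : ∀ j : J, IsCompact.{u} (F.obj j)),
    Nonempty ((t : Cocone F) ×' (IsColimit t) ×' (t.pt ≅ X))

/-- A category is locally finitely presented if it has (small) filtered colimits, its
compact objects form a skeletally small full subcategory, and every object is a filtered
colimit of compact objects. -/
def IsLocallyFinitelyPresented (C : Type*) [Category C] : Prop :=
  HasFilteredColimitsOfSize.{u, u} C ∧
    EssentiallySmall.{u} (ObjectProperty.FullSubcategory (fun X : C => IsCompact.{u} X)) ∧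
    ∀ X : C, IsFilteredColimitOfCompacts.{u} X

/-- AB5: small filtered colimits are exact, i.e. for every small filtered category `J`
(such that `C` has colimits of shape `J`), the colimit functor `(J ⥤ C) ⥤ C` preserves
finite limits. -/
def AB5P (C : Type*) [Category C] : Prop :=
  ∀ (J : Type u) (_ : SmallCategory J), IsFiltered J →
    ∀ (h : HasColimitsOfShape J C),
      Nonempty (PreservesFiniteLimits (@colim J _ C _ h))

/-- A Grothendieck category: an abelian category (`IsAbelianP` w.r.t. the given preadditive
structure) with a generator and small colimits, in which small filtered colimits are
exact (AB5). -/
def IsGrothendieckP (C : Type*) [Category C] [Preadditive C] : Prop :=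
  IsAbelianP C ∧ HasColimitsOfSize.{u, u} C ∧ (∃ G : C, IsSeparator G) ∧ AB5P.{u} C

end LFP

universe v

attribute [local instance] CategoryTheory.Abelian.hasFiniteBiproducts

/-!
Compact objects are closed under finite colimits, which gives one direction.

Conversely, let `q : Y ⟶ X` be the cokernel of a family `val i : obj i ⟶ Y`. The cokernels of the
finite subfamilies form a filtered diagram with epimorphic transition maps and colimit `X`. If all
objects involved are compact, `X` is a retract of some stage, and since the transition maps are
epi, that stage is already `X`: `q` is the cokernel of a finite subfamily. Applied to all maps
into `X` from a small separating family of compact objects (whose cokernel is `X ⟶ 0`), this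
yields an epimorphism `p : ⨁ Gⱼ ⟶ X`; applied to all maps from the family into `ker p`, it
exhibits `p` as the cokernel of a map from another finite biproduct.
-/

attribute [local instance] Cardinal.fact_isRegular_aleph0

open scoped ZeroObject

section FinitelyPresentable

variable {C : Type v} [Category.{u} C]

lemma isCompact_iff_isFinitelyPresentable {X : C} :
    IsCompact.{u} X ↔ IsFinitelyPresentable.{u} X := by
  rw [isFinitelyPresentable_iff_preservesFilteredColimitsOfSize]
  exact ⟨fun h => ⟨fun J _ _ => (h J _ ‹_›).some⟩, fun _ J _ _ => ⟨inferInstance⟩⟩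

lemma IsLocallyFinitelyPresented.essentiallySmall_isCompact
    (hC : IsLocallyFinitelyPresented.{u} C) :
    ObjectProperty.EssentiallySmall.{u} (fun X : C => IsCompact.{u} X) :=
  have := hC.2.1
  (ObjectProperty.exists_equivalence_iff _).1 ⟨_, _, ⟨equivSmallModel _⟩⟩

lemma isFinitelyPresentable_of_isColimit {K : Type*} [Category K] [Finite (Arrow K)]
    [HasLimitsOfShape Kᵒᵖ (Type u)] {D : K ⥤ C} {c : Cocone D} (hc : IsColimit c)
    (hD : ∀ k, IsFinitelyPresentable.{u} (D.obj k)) : IsFinitelyPresentable.{u} c.pt :=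
  isCardinalPresentable_of_isColimit' c hc _ (by rw [hasCardinalLT_aleph0_iff]; infer_instance)

instance [HasZeroObject C] : IsFinitelyPresentable.{u} (0 : C) :=
  isFinitelyPresentable_of_isColimit (isZero_zero C).isInitial (fun k => k.as.elim)

instance [HasZeroMorphisms C] {J : Type*} [Finite J] (f : J → C) [HasBiproduct f]
    [∀ j, IsFinitelyPresentable.{u} (f j)] : IsFinitelyPresentable.{u} (⨁ f) :=
  isFinitelyPresentable_of_isColimit (biproduct.isColimit f) (fun j => by dsimp; infer_instance)

lemma isFinitelyPresentable_of_isCokernel [HasZeroMorphisms C] {A B X : C} {a : A ⟶ B}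
    {p : B ⟶ X} {w : a ≫ p = 0} (hp : IsColimit (CokernelCofork.ofπ p w))
    [IsFinitelyPresentable.{u} A] [IsFinitelyPresentable.{u} B] :
    IsFinitelyPresentable.{u} X :=
  isFinitelyPresentable_of_isColimit hp (by rintro (_ | _) <;> dsimp <;> infer_instance)

instance [HasZeroMorphisms C] {A B : C} (a : A ⟶ B) [HasCokernel a]
    [IsFinitelyPresentable.{u} A] [IsFinitelyPresentable.{u} B] :
    IsFinitelyPresentable.{u} (cokernel a) :=
  isFinitelyPresentable_of_isCokernel (w := cokernel.condition a) (cokernelIsCokernel a)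

lemma exists_isIso_ι_of_isFinitelyPresentable {J : Type u} [SmallCategory J] [IsFiltered J]
    {D : J ⥤ C} {c : Cocone D} (hc : IsColimit c) [∀ ⦃i j⦄ (f : i ⟶ j), Epi (D.map f)]
    [∀ j, IsFinitelyPresentable.{u} (D.obj j)] [IsFinitelyPresentable.{u} c.pt] :
    ∃ j, IsIso (c.ι.app j) := by
  obtain ⟨i, g, hg⟩ := IsFinitelyPresentable.exists_hom_of_isColimit hc (𝟙 c.pt)
  obtain ⟨j, u, u', hu⟩ := IsFinitelyPresentable.exists_eq_of_isColimit hc (c.ι.app i ≫ g) (𝟙 _)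
    (by simp [hg])
  rw [Category.id_comp, Category.assoc] at hu
  -- `g ≫ D.map u` is a section of `c.ι.app j`, and a retraction since `D.map u'` is epi
  refine ⟨j, g ≫ D.map u, ?_, by simp [hg]⟩
  rw [← cancel_epi (D.map u'), c.w_assoc, hu, Category.comp_id]

end FinitelyPresentable

section FiniteSubfamilies

variable {C : Type v} [Category.{u} C] [Preadditive C] [HasFiniteBiproducts C]
  {I : Type*} {obj : I → C} {Y : C} (val : ∀ i, obj i ⟶ Y)

-- `F` is enumerated by `Fin F.card`, so that sources are biproducts of the shape in the theorem.
noncomputable def finsetDesc (F : Finset I) :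
    (⨁ fun j : Fin F.card => obj (F.equivFin.symm j)) ⟶ Y :=
  biproduct.desc fun j => val (F.equivFin.symm j)

lemma finsetDesc_comp_eq_zero_iff {F : Finset I} {Z : C} (h : Y ⟶ Z) :
    finsetDesc val F ≫ h = 0 ↔ ∀ i ∈ F, val i ≫ h = 0 := by
  refine ⟨fun hh => ?_, fun hh => ?_⟩
  · have : ∀ j, val (F.equivFin.symm j) ≫ h = 0 := fun j => by
      simpa [finsetDesc] using biproduct.ι _ j ≫= hh
    exact fun i hi =>
      (F.equivFin.symm.surjective.forall (p := fun x => val x ≫ h = 0)).2 this ⟨i, hi⟩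
  · ext j
    simp [finsetDesc, hh _ (F.equivFin.symm j).2]

variable [HasCokernels C]

noncomputable abbrev finsetCokernelDiagram : Finset I ⥤ C where
  obj F := cokernel (finsetDesc val F)
  map {F F'} h := cokernel.desc _ (cokernel.π _) <| (finsetDesc_comp_eq_zero_iff val _).2
    fun i hi => (finsetDesc_comp_eq_zero_iff val _).1 (cokernel.condition _) i (leOfHom h hi)

lemma cokernel_π_finsetCokernelDiagram_map {F F' : Finset I} (h : F ⟶ F') :
    cokernel.π _ ≫ (finsetCokernelDiagram val).map h = cokernel.π (finsetDesc val F') :=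
  cokernel.π_desc _ _ _

instance {F F' : Finset I} (h : F ⟶ F') : Epi ((finsetCokernelDiagram val).map h) :=
  epi_of_epi_fac (cokernel_π_finsetCokernelDiagram_map val h)

variable {X : C} (q : Y ⟶ X) (hq : ∀ i, val i ≫ q = 0)

noncomputable abbrev finsetCokernelCocone : Cocone (finsetCokernelDiagram val) where
  pt := X
  ι :=
    { app F := cokernel.desc _ q ((finsetDesc_comp_eq_zero_iff val q).2 fun i _ => hq i)
      naturality _ _ _ := by ext; simp [finsetCokernelDiagram] }

lemma cokernel_π_comp_ι_app_eq (s : Cocone (finsetCokernelDiagram val)) {F F' : Finset I}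
    (h : F ≤ F') :
    cokernel.π (finsetDesc val F) ≫ s.ι.app F = cokernel.π (finsetDesc val F') ≫ s.ι.app F' := by
  rw [← s.w (homOfLE h), ← Category.assoc, cokernel_π_finsetCokernelDiagram_map]

lemma nonempty_isColimit_finsetCokernelCocone [Epi q]
    (hfac : ∀ ⦃Z : C⦄ (h : Y ⟶ Z), (∀ i, val i ≫ h = 0) → ∃ t, q ≫ t = h) :
    Nonempty (IsColimit (finsetCokernelCocone val q hq)) := by
  -- a cocone `s` is determined by `cokernel.π _ ≫ s.ι.app ∅`, which kills every `val i`
  have hkill (s : Cocone (finsetCokernelDiagram val)) (i : I) :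
      val i ≫ cokernel.π (finsetDesc val ∅) ≫ s.ι.app ∅ = 0 := by
    rw [cokernel_π_comp_ι_app_eq val s (Finset.empty_subset {i}), ← Category.assoc,
      (finsetDesc_comp_eq_zero_iff val _).1 (cokernel.condition _) i (Finset.mem_singleton_self i),
      zero_comp]
  choose t ht using fun s => hfac (Z := s.pt) _ (hkill s)
  refine ⟨{ desc := t, fac := fun s F => ?_, uniq := fun s m hm => ?_ }⟩
  · rw [← cancel_epi (cokernel.π (finsetDesc val F)), cokernel.π_desc_assoc, ht,
      cokernel_π_comp_ι_app_eq val s (Finset.empty_subset F)]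
  · rw [← cancel_epi q, ht, ← hm, cokernel.π_desc_assoc]

end FiniteSubfamilies

lemma exists_finset_isColimit_cokernelCofork {C : Type v} [Category.{u} C] [Preadditive C]
    [HasFiniteBiproducts C] [HasCokernels C] {I : Type u} {obj : I → C} {Y X : C}
    (val : ∀ i, obj i ⟶ Y) [∀ i, IsFinitelyPresentable.{u} (obj i)]
    [IsFinitelyPresentable.{u} Y] [IsFinitelyPresentable.{u} X] (q : Y ⟶ X) [Epi q]
    (hq : ∀ i, val i ≫ q = 0)
    (hfac : ∀ ⦃Z : C⦄ (h : Y ⟶ Z), (∀ i, val i ≫ h = 0) → ∃ t, q ≫ t = h) :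
    ∃ (F : Finset I) (w : finsetDesc val F ≫ q = 0),
      Nonempty (IsColimit (CokernelCofork.ofπ q w)) := by
  obtain ⟨hc⟩ := nonempty_isColimit_finsetCokernelCocone val q hq hfac
  obtain ⟨F, hF⟩ := exists_isIso_ι_of_isFinitelyPresentable hc
  refine ⟨F, (finsetDesc_comp_eq_zero_iff val q).2 fun i _ => hq i, ⟨?_⟩⟩
  exact IsColimit.ofIsoColimit (cokernelIsCokernel _)
    (Cofork.ext (asIso ((finsetCokernelCocone val q hq).ι.app F)) (cokernel.π_desc _ _ _))

lemma exists_separating_family_of_essentiallySmall.{w} {C : Type*} [Category C]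
    {P : ObjectProperty C} [ObjectProperty.EssentiallySmall.{w} P] (hP : P.IsSeparating) :
    ∃ (κ : Type w) (G : κ → C), (∀ k, P (G k)) ∧ (ObjectProperty.ofObj G).IsSeparating := by
  obtain ⟨Q, _, hQP, hPQ⟩ := ObjectProperty.EssentiallySmall.exists_small_le.{w} P
  let G : Shrink.{w} (Subtype Q) → C := fun k => ((equivShrink _).symm k).1
  refine ⟨_, G, fun k => hQP _ ((equivShrink _).symm k).2,
    fun X Y f g hfg => hP f g fun A hA h => ?_⟩
  obtain ⟨B, hB, ⟨e⟩⟩ := hPQ A hA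
  have hB' : ObjectProperty.ofObj G B := by
    simpa [G] using ObjectProperty.ofObj_apply G (equivShrink _ ⟨B, hB⟩)
  simpa using e.hom ≫= hfg B hB' (e.inv ≫ h)

section SeparatingFamily

variable {C : Type v} [Category.{u} C] [Abelian C] {κ : Type u} {G : κ → C}
  (hG : (ObjectProperty.ofObj G).IsSeparating) [∀ k, IsFinitelyPresentable.{u} (G k)]
include hG

lemma exists_epi_biproduct_of_isFinitelyPresentable (X : C) [IsFinitelyPresentable.{u} X] :
    ∃ (n : ℕ) (k : Fin n → κ) (p : (⨁ fun j => G (k j)) ⟶ X), Epi p := by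
  let val : ∀ f : Σ k, G k ⟶ X, G f.1 ⟶ X := fun f => f.2
  -- since the family is separating, `X ⟶ 0` is the cokernel of all maps from it into `X`
  obtain ⟨F, _, ⟨hF⟩⟩ := exists_finset_isColimit_cokernelCofork val (0 : X ⟶ 0)
    (fun _ => comp_zero) fun Z h hh => ⟨0, by
      rw [comp_zero, eq_comm]
      exact (Preadditive.isSeparating_iff _).1 hG h (by rintro _ ⟨k⟩ f; exact hh ⟨k, f⟩)⟩
  exact ⟨F.card, fun j => (F.equivFin.symm j).1.1, finsetDesc val F,
    Preadditive.epi_of_isZero_cokernel' _ hF (isZero_zero C)⟩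

lemma exists_isColimit_cokernelCofork_of_epi {B X : C} [IsFinitelyPresentable.{u} B]
    [IsFinitelyPresentable.{u} X] (p : B ⟶ X) [Epi p] :
    ∃ (m : ℕ) (k : Fin m → κ) (a : (⨁ fun j => G (k j)) ⟶ B) (w : a ≫ p = 0),
      Nonempty (IsColimit (CokernelCofork.ofπ p w)) := by
  let val : ∀ f : Σ k, G k ⟶ kernel p, G f.1 ⟶ B := fun f => f.2 ≫ kernel.ι p
  obtain ⟨F, w, hF⟩ := exists_finset_isColimit_cokernelCofork val p (fun f => by simp [val])
    fun Z h hh => by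
      have : kernel.ι p ≫ h = 0 := (Preadditive.isSeparating_iff _).1 hG _
        (by rintro _ ⟨k⟩ f; simpa [val] using hh ⟨k, f⟩)
      obtain ⟨t, ht⟩ := CokernelCofork.IsColimit.desc'
        (Abelian.epiIsCokernelOfKernel _ (kernelIsKernel p)) h this
      exact ⟨t, ht⟩
  exact ⟨F.card, fun j => (F.equivFin.symm j).1.1, finsetDesc val F, w, hF⟩

end SeparatingFamily

theorem statement_14_general {C : Type v} [Category.{u} C] [Abelian C]
    (hlfp : IsLocallyFinitelyPresented.{u} C)
    (S : Set C) (hScpt : ∀ X ∈ S, IsCompact.{u} X) (hSgen : ObjectProperty.IsSeparating (fun G => G ∈ S)) (X : C) :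
    IsCompact.{u} X ↔
      ∃ (n m : ℕ) (s : Fin n → C) (s' : Fin m → C),
        (∀ i, s i ∈ S) ∧ (∀ j, s' j ∈ S) ∧
        ∃ (a : (⨁ s) ⟶ (⨁ s')) (p : (⨁ s') ⟶ X) (w : a ≫ p = 0),
          Nonempty (IsColimit (CokernelCofork.ofπ p w)) := by
  have := hlfp.essentiallySmall_isCompact
  have : ObjectProperty.EssentiallySmall.{u} (fun G => G ∈ S) := .of_le hScpt
  simp only [isCompact_iff_isFinitelyPresentable] at hScpt ⊢
  constructor
  · intro hX
    obtain ⟨κ, G, hGS, hG⟩ := exists_separating_family_of_essentiallySmall hSgen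
    have := fun k => hScpt _ (hGS k)
    obtain ⟨n, s', p, hp⟩ := exists_epi_biproduct_of_isFinitelyPresentable hG X
    obtain ⟨m, s, a, w, hw⟩ := exists_isColimit_cokernelCofork_of_epi hG p
    exact ⟨m, n, G ∘ s, G ∘ s', fun _ => hGS _, fun _ => hGS _, a, p, w, hw⟩
  · rintro ⟨n, m, s, s', hs, hs', a, p, w, ⟨hp⟩⟩
    have := fun i => hScpt _ (hs i)
    have := fun j => hScpt _ (hs' j)
    exact isFinitelyPresentable_of_isCokernel hp

/-- (Breitsprecher) Let `C` be a locally finitely presented Grothendieck category and `S` a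
class of compact generators. Then `X` is compact if and only if it has a presentation
`⊕ᵢ Sᵢ ⟶ ⊕ⱼ S'ⱼ ⟶ X ⟶ 0` by finite direct sums of objects of `S`. -/
theorem statement_14 {C : Type v} [Category.{u} C] [Abelian C]
    (hcolim : HasColimitsOfSize.{u, u} C) (hgen : ∃ G : C, IsSeparator G)
    (hAB5 : AB5P.{u} C) (hlfp : IsLocallyFinitelyPresented.{u} C)
    (S : Set C) (hScpt : ∀ X ∈ S, IsCompact.{u} X) (hSgen : ObjectProperty.IsSeparating (fun G => G ∈ S)) (X : C) :
    IsCompact.{u} X ↔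
      ∃ (n m : ℕ) (s : Fin n → C) (s' : Fin m → C),
        (∀ i, s i ∈ S) ∧ (∀ j, s' j ∈ S) ∧
        ∃ (a : (⨁ s) ⟶ (⨁ s')) (p : (⨁ s') ⟶ X) (w : a ≫ p = 0),
          Nonempty (IsColimit (CokernelCofork.ofπ p w)) :=
  statement_14_general hlfp S hScpt hSgen X

end Env
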